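/- arXiv:2211.07046 — 9 statements merged into one kernel-verified Lean document; each statement's English description precedes it below -/
import Mathlib

section
/- Fix α ∈ (0,1). For every v ∈ ℝ, S_α(v)·v − (1/2)·S_α'(v)·v² = (1/2) v² (|v|+1)^{α−1} (1 + (1−α)|v|) ≥ ((1−α)/2)·|v|^{2+α}. -/
open Real

/-- `S_α(v) = v(|v|+1)^α`. -/
noncomputable def Sa (α v : ℝ) : ℝ := v * (|v| + 1) ^ α

/-- The derivative of `S_α`: `S_α'(v) = (|v|+1)^α + α|v|(|v|+1)^(α−1)`. -/
noncomputable def Sa' (α v : ℝ) : ℝ :=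
  (|v| + 1) ^ α + α * |v| * (|v| + 1) ^ (α - 1)

/-- For `α ∈ (0,1)` and every `v ∈ ℝ`,
`S_α(v)·v − (1/2)S_α'(v)·v² = (1/2)v²(|v|+1)^{α−1}(1+(1−α)|v|) ≥ ((1−α)/2)|v|^{2+α}`. -/
theorem Sa_coercivity (α : ℝ) (hα : α ∈ Set.Ioo (0:ℝ) 1) (v : ℝ) :
    Sa α v * v - (1 / 2) * Sa' α v * v ^ 2
      = (1 / 2) * v ^ 2 * (|v| + 1) ^ (α - 1) * (1 + (1 - α) * |v|) ∧
    ((1 - α) / 2) * |v| ^ (2 + α)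
      ≤ Sa α v * v - (1 / 2) * Sa' α v * v ^ 2 := by
  obtain ⟨hα0, hα1⟩ := hα
  have hv0 : (0:ℝ) ≤ |v| := abs_nonneg v
  have hpos : (0:ℝ) < |v| + 1 := by linarith
  have hsplit : (|v| + 1) ^ α = (|v| + 1) ^ (α - 1) * (|v| + 1) := by
    rw [← rpow_add_one hpos.ne' (α - 1)]; ring_nf
  have heq : Sa α v * v - (1 / 2) * Sa' α v * v ^ 2
      = (1 / 2) * v ^ 2 * (|v| + 1) ^ (α - 1) * (1 + (1 - α) * |v|) := by
    simp only [Sa, Sa', hsplit]; ring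
  refine ⟨heq, ?_⟩
  rw [heq]
  rcases eq_or_lt_of_le hv0 with h0 | h0
  · have hv : v = 0 := abs_eq_zero.mp h0.symm
    simp [hv, Real.zero_rpow (show 2 + α ≠ 0 by linarith)]
  · have h1 : |v| ^ (2 + α) = v ^ 2 * |v| ^ α := by
      rw [rpow_add h0, rpow_two, sq_abs]
    have h2 : |v| ^ α ≤ (|v| + 1) ^ α :=
      rpow_le_rpow hv0 (by linarith) hα0.le
    have h3 : (1 - α) * (|v| + 1) ≤ 1 + (1 - α) * |v| := by nlinarith
    have hvp : (0:ℝ) ≤ v ^ 2 := sq_nonneg v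
    have hr : (0:ℝ) ≤ (|v| + 1) ^ (α - 1) := (rpow_pos_of_pos hpos _).le
    calc ((1 - α) / 2) * |v| ^ (2 + α)
        ≤ ((1 - α) / 2) * (v ^ 2 * (|v| + 1) ^ α) := by
          rw [h1]
          have := mul_le_mul_of_nonneg_left h2 hvp
          nlinarith
      _ = (1 / 2) * v ^ 2 * (|v| + 1) ^ (α - 1) * ((1 - α) * (|v| + 1)) := by
          rw [hsplit]; ring
      _ ≤ (1 / 2) * v ^ 2 * (|v| + 1) ^ (α - 1) * (1 + (1 - α) * |v|) := by
          apply mul_le_mul_of_nonneg_left h3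
          positivity
end

section
/- Fix α ∈ (0,1). The function S_α is continuously differentiable on ℝ with derivative S_α'. Moreover, S_α' is Lipschitz continuous with constant 2α, and for every v ∈ ℝ, |S_α(v) − S_α'(v)·v| = α v² (|v|+1)^{α−1} ≤ α · min(v², |v|^{1+α}). -/
/-!
Away from `0`, `S_α` is differentiable by the chain rule through `|·|`; at `0` its difference
quotient is `(|x| + 1) ^ α → 1`. With `u = |v| + 1 ≥ 1` one has
`S_α'(v) = (1 + α) u ^ α - α u ^ (α - 1)`, whose derivative in `u`,
`α (1 + α) u ^ (α - 1) + α (1 - α) u ^ (α - 2)`, lies in `[0, 2α]` for `u ≥ 1`; the mean value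
theorem and `||a| - |b|| ≤ |a - b|` give the Lipschitz bound. Finally
`S_α(v) - S_α'(v) v = -α |v| v u ^ (α - 1)`, and `u ^ (α - 1)` is at most both `1` and
`|v| ^ (α - 1)`.
-/

open Real

theorem hasDerivAt_id_mul_of_continuousAt {g : ℝ → ℝ} (hg : ContinuousAt g 0) :
    HasDerivAt (fun x => x * g x) (g 0) 0 := by
  rw [hasDerivAt_iff_tendsto_slope_zero]
  refine (hg.tendsto.mono_left nhdsWithin_le_nhds).congr' ?_
  filter_upwards [self_mem_nhdsWithin] with t (ht : t ≠ 0)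
  simp [ht]

theorem continuous_abs_add_one_rpow (p : ℝ) : Continuous fun v : ℝ => (|v| + 1) ^ p :=
  (continuous_abs.add continuous_const).rpow_const fun v =>
    Or.inl (by positivity : (0 : ℝ) < |v| + 1).ne'

theorem hasDerivAt_Sa (α v : ℝ) : HasDerivAt (Sa α) (Sa' α v) v := by
  rcases eq_or_ne v 0 with rfl | hv
  · exact (hasDerivAt_id_mul_of_continuousAt
      (continuous_abs_add_one_rpow α).continuousAt).congr_deriv (by simp [Sa'])
  · have hu : |v| + 1 ≠ 0 := by positivity
    refine ((hasDerivAt_id' v).mul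
      (((hasDerivAt_abs hv).add_const 1).rpow_const (p := α) (Or.inl hu))).congr_deriv ?_
    rw [Sa']
    linear_combination α * (|v| + 1) ^ (α - 1) * self_mul_sign v

theorem continuous_Sa' (α : ℝ) : Continuous (Sa' α) :=
  (continuous_abs_add_one_rpow α).add
    ((continuous_const.mul continuous_abs).mul (continuous_abs_add_one_rpow (α - 1)))

noncomputable def saProfile (α u : ℝ) : ℝ := (1 + α) * u ^ α - α * u ^ (α - 1)

theorem Sa'_eq_saProfile (α v : ℝ) : Sa' α v = saProfile α (|v| + 1) := by
  have hu : |v| + 1 ≠ 0 := by positivity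
  rw [Sa', saProfile, rpow_sub_one hu]
  field_simp
  ring

theorem hasDerivAt_saProfile (α : ℝ) {u : ℝ} (hu : u ≠ 0) :
    HasDerivAt (saProfile α) (α * (1 + α) * u ^ (α - 1) + α * (1 - α) * u ^ (α - 2)) u := by
  refine (((hasDerivAt_rpow_const (Or.inl hu)).const_mul (1 + α)).sub
    ((hasDerivAt_rpow_const (Or.inl hu)).const_mul α)).congr_deriv ?_
  rw [show α - 1 - 1 = α - 2 by ring]
  ring

theorem abs_deriv_saProfile_le {α u : ℝ} (hα₀ : 0 ≤ α) (hα₁ : α ≤ 1) (hu : 1 ≤ u) :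
    |α * (1 + α) * u ^ (α - 1) + α * (1 - α) * u ^ (α - 2)| ≤ 2 * α := by
  have h₁ : u ^ (α - 1) ≤ 1 := rpow_le_one_of_one_le_of_nonpos hu (by linarith)
  have h₂ : u ^ (α - 2) ≤ 1 := rpow_le_one_of_one_le_of_nonpos hu (by linarith)
  have hu₀ : 0 ≤ u := by linarith
  have hc₁ : 0 ≤ α * (1 + α) := by positivity
  have hc₂ : 0 ≤ α * (1 - α) := mul_nonneg hα₀ (by linarith)
  rw [abs_of_nonneg (by positivity)]
  nlinarith [mul_le_mul_of_nonneg_left h₁ hc₁, mul_le_mul_of_nonneg_left h₂ hc₂]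

theorem abs_saProfile_sub_le {α x y : ℝ} (hα₀ : 0 ≤ α) (hα₁ : α ≤ 1) (hx : 1 ≤ x) (hy : 1 ≤ y) :
    |saProfile α y - saProfile α x| ≤ 2 * α * |y - x| :=
  (convex_Ici 1).norm_image_sub_le_of_norm_hasDerivWithin_le
    (fun _ hu => (hasDerivAt_saProfile α (zero_lt_one.trans_le hu).ne').hasDerivWithinAt)
    (fun _ hu => abs_deriv_saProfile_le hα₀ hα₁ hu) hx hy

theorem abs_Sa'_sub_le {α : ℝ} (hα₀ : 0 ≤ α) (hα₁ : α ≤ 1) (a b : ℝ) :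
    |Sa' α a - Sa' α b| ≤ 2 * α * |a - b| := by
  rw [Sa'_eq_saProfile, Sa'_eq_saProfile]
  calc _ ≤ 2 * α * |(|a| + 1) - (|b| + 1)| := by
        apply abs_saProfile_sub_le hα₀ hα₁ <;> linarith [abs_nonneg a, abs_nonneg b]
    _ ≤ 2 * α * |a - b| := by
        rw [add_sub_add_right_eq_sub]
        exact mul_le_mul_of_nonneg_left (abs_abs_sub_abs_le_abs_sub a b) (by positivity)

theorem Sa_sub_Sa'_mul (α v : ℝ) :
    Sa α v - Sa' α v * v = -(α * (|v| * v) * (|v| + 1) ^ (α - 1)) := by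
  rw [Sa, Sa']
  ring

theorem abs_Sa_sub_Sa'_mul {α : ℝ} (hα : 0 ≤ α) (v : ℝ) :
    |Sa α v - Sa' α v * v| = α * v ^ 2 * (|v| + 1) ^ (α - 1) := by
  have hw : 0 ≤ (|v| + 1) ^ (α - 1) := by positivity
  rw [Sa_sub_Sa'_mul, abs_neg, abs_mul, abs_mul, abs_mul, abs_abs, abs_of_nonneg hα,
    abs_of_nonneg hw, abs_mul_abs_self, sq]

theorem sq_mul_abs_add_one_rpow_le_min {α : ℝ} (hα : α ≤ 1) (v : ℝ) :
    v ^ 2 * (|v| + 1) ^ (α - 1) ≤ min (v ^ 2) (|v| ^ (1 + α)) := by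
  rcases eq_or_ne v 0 with rfl | hv
  · simpa using rpow_nonneg le_rfl (1 + α)
  have hv₀ : 0 < |v| := abs_pos.mpr hv
  refine le_min ?_ ?_
  · exact mul_le_of_le_one_right (sq_nonneg v)
      (rpow_le_one_of_one_le_of_nonpos (by linarith) (by linarith))
  · calc v ^ 2 * (|v| + 1) ^ (α - 1) ≤ v ^ 2 * |v| ^ (α - 1) :=
          mul_le_mul_of_nonneg_left (rpow_le_rpow_of_nonpos hv₀ (by linarith) (by linarith))
            (sq_nonneg v)
      _ = |v| ^ (1 + α) := by
          rw [← sq_abs, ← rpow_natCast, ← rpow_add hv₀]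
          congr 1
          push_cast
          ring

/-- For `α ∈ (0,1)`: `S_α` is continuously differentiable with derivative `S_α'`;
`S_α'` is Lipschitz with constant `2α`; and
`|S_α(v) − S_α'(v)v| = α v² (|v|+1)^{α−1} ≤ α·min(v², |v|^{1+α})`. -/
theorem Sa_regularity (α : ℝ) (hα : α ∈ Set.Ioo (0:ℝ) 1) :
    (∀ v : ℝ, HasDerivAt (Sa α) (Sa' α v) v) ∧
    Continuous (Sa' α) ∧
    (∀ a b : ℝ, |Sa' α a - Sa' α b| ≤ 2 * α * |a - b|) ∧
    (∀ v : ℝ,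
      |Sa α v - Sa' α v * v| = α * v ^ 2 * (|v| + 1) ^ (α - 1) ∧
      α * v ^ 2 * (|v| + 1) ^ (α - 1) ≤ α * min (v ^ 2) (|v| ^ (1 + α))) := by
  obtain ⟨hα₀, hα₁⟩ := hα
  refine ⟨hasDerivAt_Sa α, continuous_Sa' α, abs_Sa'_sub_le hα₀.le hα₁.le,
    fun v => ⟨abs_Sa_sub_Sa'_mul hα₀.le v, ?_⟩⟩
  rw [mul_assoc]
  exact mul_le_mul_of_nonneg_left (sq_mul_abs_add_one_rpow_le_min hα₁.le v) hα₀.le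
end

section
/- Fix ℓ > 0 and r ≥ 1. For every v ∈ ℝ: 0 ≤ v²/2 − S_ℓ(v), the difference v²/2 − S_ℓ(v) vanishes for |v| ≤ ℓ, and v²/2 − S_ℓ(v) ≤ v²·1_{\{|v| > ℓ\}} ≤ ℓ^{−2(r−1)}·|v|^{2r}·1_{\{|v| > ℓ\}}. -/
open Real

/-- The renormalisation entropy `S_ℓ`: `S_ℓ(v) = v²/2` for `|v| ≤ ℓ`;
`S_ℓ(v) = −|v|³/(6ℓ) + v² − (ℓ/2)|v| + ℓ²/6` for `ℓ < |v| < 2ℓ`;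
`S_ℓ(v) = (3ℓ/2)|v| − (7/6)ℓ²` for `|v| ≥ 2ℓ`. -/
noncomputable def Sl (ℓ v : ℝ) : ℝ :=
  if |v| ≤ ℓ then v ^ 2 / 2
  else if |v| < 2 * ℓ then -|v| ^ 3 / (6 * ℓ) + v ^ 2 - (ℓ / 2) * |v| + ℓ ^ 2 / 6
  else (3 * ℓ / 2) * |v| - (7 / 6) * ℓ ^ 2

/-- The derivative of `S_ℓ`: `S_ℓ'(v) = v` for `|v| ≤ ℓ`;
`S_ℓ'(v) = sgn(v)(2|v| − v²/(2ℓ) − ℓ/2)` for `ℓ < |v| < 2ℓ`;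
`S_ℓ'(v) = (3ℓ/2)sgn(v)` for `|v| ≥ 2ℓ`. -/
noncomputable def Sl' (ℓ v : ℝ) : ℝ :=
  if |v| ≤ ℓ then v
  else if |v| < 2 * ℓ then Real.sign v * (2 * |v| - v ^ 2 / (2 * ℓ) - ℓ / 2)
  else (3 * ℓ / 2) * Real.sign v

/-- For `ℓ > 0` and `r ≥ 1`: `0 ≤ v²/2 − S_ℓ(v)`, the difference vanishes for `|v| ≤ ℓ`, and
`v²/2 − S_ℓ(v) ≤ v²·1_{|v|>ℓ} ≤ ℓ^{−2(r−1)}|v|^{2r}·1_{|v|>ℓ}`. -/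
theorem Sl_quadratic_error (ℓ r : ℝ) (hℓ : 0 < ℓ) (hr : 1 ≤ r) (v : ℝ) :
    0 ≤ v ^ 2 / 2 - Sl ℓ v ∧
    (|v| ≤ ℓ → v ^ 2 / 2 - Sl ℓ v = 0) ∧
    v ^ 2 / 2 - Sl ℓ v ≤ Set.indicator {w : ℝ | ℓ < |w|} (fun w => w ^ 2) v ∧
    Set.indicator {w : ℝ | ℓ < |w|} (fun w => w ^ 2) v
      ≤ Set.indicator {w : ℝ | ℓ < |w|} (fun w => ℓ ^ (-(2 * (r - 1))) * |w| ^ (2 * r)) v := by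
  have hv2 : v ^ 2 = |v| ^ 2 := (sq_abs v).symm
  have hA : 0 ≤ v ^ 2 / 2 - Sl ℓ v := by
    unfold Sl
    split_ifs with ha hb
    · linarith
    · push_neg at ha
      have e : v ^ 2 / 2 - (-|v| ^ 3 / (6 * ℓ) + v ^ 2 - (ℓ / 2) * |v| + ℓ ^ 2 / 6)
          = (|v| - ℓ) ^ 3 / (6 * ℓ) := by
        field_simp; rw [hv2]; ring
      rw [e]
      exact div_nonneg (pow_nonneg (by linarith) 3) (by linarith)
    · push_neg at hb
      rw [hv2]
      nlinarith [sq_nonneg (|v| - 2 * ℓ), mul_nonneg hℓ.le (sub_nonneg.mpr hb)]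
  have hB : |v| ≤ ℓ → v ^ 2 / 2 - Sl ℓ v = 0 := by
    intro h
    unfold Sl
    rw [if_pos h]; ring
  have hC : ℓ < |v| → v ^ 2 / 2 - Sl ℓ v ≤ v ^ 2 := by
    intro h
    unfold Sl
    rw [if_neg (not_le.mpr h)]
    split_ifs with hb
    · have e : v ^ 2 / 2 - (-|v| ^ 3 / (6 * ℓ) + v ^ 2 - (ℓ / 2) * |v| + ℓ ^ 2 / 6)
          = (|v| - ℓ) ^ 3 / (6 * ℓ) := by
        field_simp; rw [hv2]; ring
      rw [e, hv2, div_le_iff₀ (by linarith : (0:ℝ) < 6 * ℓ)]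
      nlinarith [sq_nonneg (|v| - ℓ), abs_nonneg v]
    · push_neg at hb
      rw [hv2]
      nlinarith [mul_nonneg hℓ.le (abs_nonneg v)]
  have hD : ℓ < |v| → v ^ 2 ≤ ℓ ^ (-(2 * (r - 1))) * |v| ^ (2 * r) := by
    intro h
    have hxpos : 0 < |v| := lt_trans hℓ h
    have hexp : 0 ≤ 2 * (r - 1) := by linarith
    have h1 : ℓ ^ (2 * (r - 1)) ≤ |v| ^ (2 * (r - 1)) :=
      Real.rpow_le_rpow hℓ.le h.le hexp
    have hpow : 0 < ℓ ^ (2 * (r - 1)) := Real.rpow_pos_of_pos hℓ _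
    have h2 : |v| ^ (2 * r) = |v| ^ 2 * |v| ^ (2 * (r - 1)) := by
      rw [← Real.rpow_natCast |v| 2, ← Real.rpow_add hxpos]
      norm_num; ring_nf
    rw [Real.rpow_neg hℓ.le, inv_mul_eq_div, le_div_iff₀ hpow, h2, hv2]
    exact mul_le_mul_of_nonneg_left h1 (sq_nonneg _)
  refine ⟨hA, hB, ?_, ?_⟩
  · by_cases h : ℓ < |v|
    · have hm : v ∈ {w : ℝ | ℓ < |w|} := h
      rw [Set.indicator_of_mem hm]; exact hC h
    · have hm : v ∉ {w : ℝ | ℓ < |w|} := h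
      rw [Set.indicator_of_notMem hm, hB (le_of_not_gt h)]
  · by_cases h : ℓ < |v|
    · have hm : v ∈ {w : ℝ | ℓ < |w|} := h
      rw [Set.indicator_of_mem hm, Set.indicator_of_mem hm]; exact hD h
    · have hm : v ∉ {w : ℝ | ℓ < |w|} := h
      rw [Set.indicator_of_notMem hm, Set.indicator_of_notMem hm]
end

section
/- Fix ℓ > 0. For every v ∈ ℝ, |S_ℓ'(v)| ≤ min(|v|, (3/2)ℓ). Consequently, for all a, b ∈ ℝ, |S_ℓ(b₊) − S_ℓ(a₊)| ≤ (|a| + |b|)·|b − a| and |S_ℓ(b₋) − S_ℓ(a₋)| ≤ (|a| + |b|)·|b − a|. -/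
open Real

lemma Sl_even (ℓ v : ℝ) : Sl ℓ (-v) = Sl ℓ v := by
  unfold Sl; rw [abs_neg]; ring_nf

/-- mid region polynomial -/
noncomputable def M (ℓ t : ℝ) : ℝ := -t ^ 3 / (6 * ℓ) + t ^ 2 - (ℓ / 2) * t + ℓ ^ 2 / 6

lemma Mid_bound (ℓ : ℝ) (hℓ : 0 < ℓ) {a b : ℝ} (h1 : ℓ ≤ a) (h2 : a ≤ b) (h3 : b ≤ 2 * ℓ) :
    0 ≤ M ℓ b - M ℓ a ∧ M ℓ b - M ℓ a ≤ (b ^ 2 - a ^ 2) / 2 := by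
  have hne : ℓ ≠ 0 := hℓ.ne'
  have e1 : M ℓ b - M ℓ a
      = (-(b^3 - a^3) + 6*ℓ*(b^2 - a^2) - 3*ℓ^2*(b - a)) / (6*ℓ) := by
    unfold M; field_simp; ring
  have e2 : M ℓ b - M ℓ a - (b ^ 2 - a ^ 2) / 2
      = -((b^3 - a^3) - 3*ℓ*(b^2 - a^2) + 3*ℓ^2*(b - a)) / (6*ℓ) := by
    unfold M; field_simp; ring
  constructor
  · rw [e1]
    apply div_nonneg _ (by linarith)
    have hba : (0:ℝ) ≤ b - a := by linarith
    nlinarith [mul_nonneg hba (mul_nonneg (by linarith : (0:ℝ) ≤ a) (by linarith : (0:ℝ) ≤ 2*ℓ - a)),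
      mul_nonneg hba (mul_nonneg (by linarith : (0:ℝ) ≤ b) (by linarith : (0:ℝ) ≤ 2*ℓ - b)),
      mul_nonneg hba (mul_nonneg (by linarith : (0:ℝ) ≤ b) (by linarith : (0:ℝ) ≤ 2*ℓ - a)),
      mul_nonneg hba (mul_nonneg hℓ.le (by linarith : (0:ℝ) ≤ a - ℓ)),
      mul_nonneg hba (mul_nonneg hℓ.le (by linarith : (0:ℝ) ≤ b - ℓ)),
      mul_nonneg hba (mul_pos hℓ hℓ).le]
  · have key : 0 ≤ (b^3 - a^3) - 3*ℓ*(b^2 - a^2) + 3*ℓ^2*(b - a) := by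
      nlinarith [sq_nonneg (a + b - 2*ℓ), sq_nonneg (a - ℓ), sq_nonneg (b - ℓ),
        sub_nonneg.2 h2]
    have : -((b^3 - a^3) - 3*ℓ*(b^2 - a^2) + 3*ℓ^2*(b - a)) / (6*ℓ) ≤ 0 := by
      apply div_nonpos_of_nonpos_of_nonneg (by linarith) (by linarith)
    linarith [e2 ▸ this]

lemma M_at_l (ℓ : ℝ) (hℓ : 0 < ℓ) : M ℓ ℓ = ℓ ^ 2 / 2 := by
  unfold M; field_simp; ring

lemma M_at_2l (ℓ : ℝ) (hℓ : 0 < ℓ) : M ℓ (2*ℓ) = (3 * ℓ / 2) * (2*ℓ) - (7 / 6) * ℓ ^ 2 := by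
  unfold M; field_simp; ring

lemma Sl_mono_bound (ℓ : ℝ) (hℓ : 0 < ℓ) {a b : ℝ} (ha : 0 ≤ a) (hab : a ≤ b) :
    0 ≤ Sl ℓ b - Sl ℓ a ∧ Sl ℓ b - Sl ℓ a ≤ (b ^ 2 - a ^ 2) / 2 := by
  have hb : 0 ≤ b := le_trans ha hab
  have hne : ℓ ≠ 0 := hℓ.ne'
  unfold Sl
  rw [abs_of_nonneg ha, abs_of_nonneg hb]
  split_ifs with h1 h2 h3 h4 h5 h6 h7 h8
  · constructor <;> nlinarith [mul_nonneg (sub_nonneg.2 hab) (by linarith : (0:ℝ) ≤ a + b)]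
  · exact absurd (le_trans hab h1) h2
  · exact absurd (le_trans hab h1) h2
  · -- a ≤ ℓ < b < 2ℓ : Sl b = M b
    have hb1 : ℓ ≤ b := by linarith
    obtain ⟨l1, u1⟩ := Mid_bound ℓ hℓ (le_refl ℓ) hb1 (by linarith)
    have hMl := M_at_l ℓ hℓ
    have ha2 : a ^ 2 ≤ ℓ ^ 2 := by nlinarith
    constructor
    · have : (0:ℝ) ≤ M ℓ b - ℓ^2/2 := by rw [← hMl]; exact l1
      show (0:ℝ) ≤ M ℓ b - a ^ 2 / 2
      linarith
    · have : M ℓ b - M ℓ ℓ ≤ (b^2 - ℓ^2)/2 := u1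
      rw [hMl] at this
      show M ℓ b - a ^ 2 / 2 ≤ (b ^ 2 - a ^ 2) / 2
      linarith
  · -- ℓ < a ≤ b < 2ℓ
    exact Mid_bound ℓ hℓ (by linarith) hab (by linarith)
  · -- a ≥ 2ℓ but b < 2ℓ : contradiction
    exact absurd (lt_of_le_of_lt hab h4) h6
  · -- a ≤ ℓ, b ≥ 2ℓ
    have hb2 : 2*ℓ ≤ b := le_of_not_gt h4
    constructor
    · nlinarith [mul_nonneg hℓ.le (by linarith : (0:ℝ) ≤ b - 2*ℓ)]
    · nlinarith [sq_nonneg (2*b - 3*ℓ)]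
  · -- ℓ < a < 2ℓ ≤ b
    have hb2 : 2*ℓ ≤ b := le_of_not_gt h4
    obtain ⟨l1, u1⟩ := Mid_bound ℓ hℓ (by linarith : ℓ ≤ a) (by linarith : a ≤ 2*ℓ) (le_refl (2*ℓ))
    have h2l := M_at_2l ℓ hℓ
    constructor
    · have k1 : (0:ℝ) ≤ (3 * ℓ / 2) * (2*ℓ) - (7 / 6) * ℓ ^ 2 - M ℓ a := by rw [← h2l]; linarith
      have k3 : (0:ℝ) ≤ (3 * ℓ / 2) * b - (3 * ℓ / 2) * (2*ℓ) := by nlinarith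
      show (0:ℝ) ≤ 3 * ℓ / 2 * b - 7 / 6 * ℓ ^ 2 - M ℓ a
      linarith
    · have hu : M ℓ (2*ℓ) - M ℓ a ≤ ((2*ℓ)^2 - a^2)/2 := u1
      rw [h2l] at hu
      have k3 : (3 * ℓ / 2) * b - (3 * ℓ / 2) * (2*ℓ) ≤ (b^2 - (2*ℓ)^2)/2 := by
        nlinarith [mul_nonneg (by linarith : (0:ℝ) ≤ b - 2*ℓ) (by linarith : (0:ℝ) ≤ b + 2*ℓ - 3*ℓ)]
      show 3 * ℓ / 2 * b - 7 / 6 * ℓ ^ 2 - M ℓ a ≤ (b ^ 2 - a ^ 2) / 2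
      linarith
  · -- both ≥ 2ℓ
    have hb2 : 2*ℓ ≤ b := le_of_not_gt h4
    have ha2 : 2*ℓ ≤ a := le_of_not_gt h8
    constructor
    · nlinarith [mul_nonneg hℓ.le (sub_nonneg.2 hab)]
    · nlinarith [mul_nonneg (sub_nonneg.2 hab) (by linarith : (0:ℝ) ≤ a + b - 3*ℓ)]

lemma Sl_plus_lip (ℓ : ℝ) (hℓ : 0 < ℓ) (a b : ℝ) :
    |Sl ℓ (max b 0) - Sl ℓ (max a 0)| ≤ (|a| + |b|) * |b - a| := by
  set a' := max a 0 with ha'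
  set b' := max b 0 with hb'
  have ha0 : 0 ≤ a' := le_max_right a 0
  have hb0 : 0 ≤ b' := le_max_right b 0
  have haa : a' ≤ |a| := max_le (le_abs_self a) (abs_nonneg a)
  have hbb : b' ≤ |b| := max_le (le_abs_self b) (abs_nonneg b)
  have hd : |b' - a'| ≤ |b - a| := abs_max_sub_max_le_abs b a 0
  rcases le_total a' b' with h | h
  · obtain ⟨l1, u1⟩ := Sl_mono_bound ℓ hℓ ha0 h
    rw [abs_of_nonneg l1]
    have hd' : b' - a' ≤ |b - a| := le_trans (le_abs_self _) hd
    nlinarith [abs_nonneg (b - a), abs_nonneg a, abs_nonneg b,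
      mul_nonneg (sub_nonneg.2 h) (by linarith : (0:ℝ) ≤ |a| + |b| - (a' + b')/2)]
  · obtain ⟨l1, u1⟩ := Sl_mono_bound ℓ hℓ hb0 h
    rw [abs_sub_comm, abs_of_nonneg l1]
    have hd' : a' - b' ≤ |b - a| := by
      rw [abs_sub_comm] at hd; exact le_trans (le_abs_self _) hd
    nlinarith [abs_nonneg (b - a), abs_nonneg a, abs_nonneg b,
      mul_nonneg (sub_nonneg.2 h) (by linarith : (0:ℝ) ≤ |a| + |b| - (a' + b')/2)]

/-- For `ℓ > 0`: `|S_ℓ'(v)| ≤ min(|v|, (3/2)ℓ)` for every `v`; consequently, for all `a, b`,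
`|S_ℓ(b₊) − S_ℓ(a₊)| ≤ (|a|+|b|)|b−a|` and `|S_ℓ(b₋) − S_ℓ(a₋)| ≤ (|a|+|b|)|b−a|`. -/
theorem Sl'_bound_and_Sl_pm_lipschitz (ℓ : ℝ) (hℓ : 0 < ℓ) :
    (∀ v : ℝ, |Sl' ℓ v| ≤ min |v| ((3 / 2) * ℓ)) ∧
    (∀ a b : ℝ, |Sl ℓ (max b 0) - Sl ℓ (max a 0)| ≤ (|a| + |b|) * |b - a|) ∧
    (∀ a b : ℝ, |Sl ℓ (min b 0) - Sl ℓ (min a 0)| ≤ (|a| + |b|) * |b - a|) := by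
  refine ⟨?_, fun a b => Sl_plus_lip ℓ hℓ a b, ?_⟩
  · intro v
    have hne : ℓ ≠ 0 := hℓ.ne'
    unfold Sl'
    split_ifs with h1 h2
    · exact le_min (le_refl |v|) (by linarith)
    · -- mid region
      have hv0 : v ≠ 0 := by
        intro h; rw [h, abs_zero] at h1; exact h1 hℓ.le
      have hsgn : |Real.sign v| = 1 := by
        rcases hv0.lt_or_gt with h | h
        · rw [Real.sign_of_neg h]; norm_num
        · rw [Real.sign_of_pos h]; norm_num
      set t := |v| with htdef
      have ht1 : ℓ < t := lt_of_not_ge h1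
      have ht2 : t < 2*ℓ := h2
      have hv2 : v ^ 2 = t ^ 2 := (sq_abs v).symm
      have hE : 2 * |v| - v ^ 2 / (2 * ℓ) - ℓ / 2 = (4*ℓ*t - t^2 - ℓ^2) / (2*ℓ) := by
        rw [hv2]; field_simp; ring
      rw [abs_mul, hsgn, one_mul, hE]
      have hnum0 : 0 ≤ 4*ℓ*t - t^2 - ℓ^2 := by nlinarith
      rw [abs_of_nonneg (div_nonneg hnum0 (by linarith))]
      apply le_min
      · rw [div_le_iff₀ (by linarith : (0:ℝ) < 2*ℓ)]
        nlinarith [sq_nonneg (t - ℓ)]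
      · rw [div_le_iff₀ (by linarith : (0:ℝ) < 2*ℓ)]
        nlinarith [sq_nonneg (t - 2*ℓ)]
    · have hv0 : v ≠ 0 := by
        intro h; rw [h, abs_zero] at h2; exact h2 (by linarith)
      have hsgn : |Real.sign v| = 1 := by
        rcases hv0.lt_or_gt with h | h
        · rw [Real.sign_of_neg h]; norm_num
        · rw [Real.sign_of_pos h]; norm_num
      rw [abs_mul, hsgn, mul_one, abs_of_nonneg (by linarith : (0:ℝ) ≤ 3*ℓ/2)]
      refine le_min (by linarith [le_of_not_gt h2]) (by linarith)
  · intro a b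
    have e1 : min b 0 = -(max (-b) 0) := by
      rw [show max (-b) 0 = max (-b) (-0) by rw [neg_zero], max_neg_neg, neg_neg]
    have e2 : min a 0 = -(max (-a) 0) := by
      rw [show max (-a) 0 = max (-a) (-0) by rw [neg_zero], max_neg_neg, neg_neg]
    rw [e1, e2, Sl_even, Sl_even]
    have := Sl_plus_lip ℓ hℓ (-a) (-b)
    rw [abs_neg, abs_neg] at this
    have e3 : |-b - -a| = |b - a| := by rw [abs_sub_comm]; ring_nf
    rw [e3] at this
    exact this
end

section
/- Fix ℓ > 0. The function v ↦ S_ℓ(v₋) is differentiable on all of ℝ with derivative v ↦ S_ℓ'(v₋). Moreover, the function r₁ : ℝ → ℝ defined by r₁(v) = S_ℓ'(v₋) − v₋ (explicitly, r₁(v) = 0 for v ≥ −ℓ, r₁(v) = (v+ℓ)²/(2ℓ) for −2ℓ < v < −ℓ, and r₁(v) = −(3ℓ + 2v)/2 for v ≤ −2ℓ) is nonnegative and convex on ℝ. -/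
/-!
On `(-∞, -2ℓ]`, `[-2ℓ, -ℓ]`, `[-ℓ, 0]` and `[0, ∞)` the function `v ↦ S_ℓ(v₋)` is a linear, a cubic,
a quadratic and the zero polynomial, and consecutive pieces agree to first order at the
breakpoints; gluing them shows that it is differentiable with derivative the corresponding
piecewise formula, which is `S_ℓ'(v₋)`. The same gluing shows that `r₁` is differentiable with
derivative `(v + ℓ)/ℓ` clamped to `[-1, 0]`, which is monotone, so `r₁` is convex.
-/

open Real

open Set

theorem hasDerivAt_ite_le {F : Type*} [NormedAddCommGroup F] [NormedSpace ℝ F]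
    {f g f' g' : ℝ → F} {a : ℝ}
    (hf : ∀ x, HasDerivAt f (f' x) x) (hg : ∀ x, HasDerivAt g (g' x) x)
    (hfg : f a = g a) (hfg' : f' a = g' a) (x : ℝ) :
    HasDerivAt (fun y => if y ≤ a then f y else g y) (if x ≤ a then f' x else g' x) x := by
  rcases lt_trichotomy x a with hx | rfl | hx
  · rw [if_pos hx.le]
    refine (hf x).congr_of_eventuallyEq ?_
    filter_upwards [eventually_lt_nhds hx] with y hy using if_pos hy.le
  · have left : HasDerivWithinAt (fun y => if y ≤ x then f y else g y) (f' x) (Iic x) x :=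
      (hf x).hasDerivWithinAt.congr_of_mem (fun y hy => if_pos (mem_Iic.1 hy)) self_mem_Iic
    have right : HasDerivWithinAt (fun y => if y ≤ x then f y else g y) (f' x) (Ici x) x := by
      refine hfg' ▸ (hg x).hasDerivWithinAt.congr_of_mem (fun y hy => ?_) self_mem_Ici
      rcases (mem_Ici.1 hy).eq_or_lt with rfl | hy
      · exact (if_pos le_rfl).trans hfg
      · exact if_neg hy.not_ge
    rw [if_pos le_rfl, ← hasDerivWithinAt_univ, ← Iic_union_Ici (a := x)]
    exact left.union right
  · rw [if_neg hx.not_ge]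
    refine (hg x).congr_of_eventuallyEq ?_
    filter_upwards [eventually_gt_nhds hx] with y hy using if_neg hy.not_ge

theorem monotone_ite_le {α β : Type*} [LinearOrder α] [Preorder β] {f g : α → β} {a : α}
    (hf : Monotone f) (hg : Monotone g) (hfg : f a ≤ g a) :
    Monotone fun x => if x ≤ a then f x else g x := by
  intro x y hxy
  dsimp only
  split_ifs with hx hy hy
  · exact hf hxy
  · exact (hf hx).trans (hfg.trans (hg (not_le.1 hy).le))
  · exact absurd (hxy.trans hy) hx
  · exact hg hxy

section
variable {ℓ : ℝ}

theorem Sl_min_zero_eq (hℓ : 0 < ℓ) (v : ℝ) :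
    Sl ℓ (min v 0) =
      if v ≤ -(2 * ℓ) then -(3 * ℓ / 2) * v - 7 / 6 * ℓ ^ 2
      else if v ≤ -ℓ then v ^ 3 / (6 * ℓ) + v ^ 2 + ℓ / 2 * v + ℓ ^ 2 / 6
      else if v ≤ 0 then v ^ 2 / 2 else 0 := by
  rcases le_or_gt v 0 with hv | hv
  · rw [min_eq_left hv, Sl, abs_of_nonpos hv]
    -- `Sl` puts `v = -ℓ` in its quadratic branch, the formula in its cubic one; they agree there.
    split_ifs <;> first
      | linarith
      | (rw [le_antisymm ‹v ≤ -ℓ› (by linarith)]; field_simp; ring1)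
      | (field_simp; ring1)
  · rw [min_eq_right hv.le, Sl, abs_zero, if_pos hℓ.le]
    simp [hv.not_ge, (by linarith : ¬ v ≤ -ℓ), (by linarith : ¬ v ≤ -(2 * ℓ))]

theorem Sl'_min_zero_eq (hℓ : 0 < ℓ) (v : ℝ) :
    Sl' ℓ (min v 0) =
      if v ≤ -(2 * ℓ) then -(3 * ℓ / 2)
      else if v ≤ -ℓ then v ^ 2 / (2 * ℓ) + 2 * v + ℓ / 2
      else if v ≤ 0 then v else 0 := by
  rcases lt_or_ge v 0 with hv | hv
  · rw [min_eq_left hv.le, Sl', abs_of_neg hv, Real.sign_of_neg hv]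
    split_ifs <;> first
      | linarith
      | ring1
      | (rw [le_antisymm ‹v ≤ -ℓ› (by linarith)]; field_simp; ring1)
  · rw [min_eq_right hv, Sl', abs_zero, if_pos hℓ.le]
    simp [(by linarith : ¬ v ≤ -ℓ), (by linarith : ¬ v ≤ -(2 * ℓ))]
    exact le_antisymm hv

theorem hasDerivAt_Sl_min_zero (hℓ : 0 < ℓ) (v : ℝ) :
    HasDerivAt (fun w => Sl ℓ (min w 0)) (Sl' ℓ (min v 0)) v := by
  have linear (x : ℝ) :
      HasDerivAt (fun y => -(3 * ℓ / 2) * y - 7 / 6 * ℓ ^ 2) (-(3 * ℓ / 2)) x := by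
    simpa using ((hasDerivAt_id x).const_mul (-(3 * ℓ / 2))).sub_const (7 / 6 * ℓ ^ 2)
  have cubic (x : ℝ) : HasDerivAt (fun y => y ^ 3 / (6 * ℓ) + y ^ 2 + ℓ / 2 * y + ℓ ^ 2 / 6)
      (x ^ 2 / (2 * ℓ) + 2 * x + ℓ / 2) x := by
    refine ((((hasDerivAt_pow 3 x).div_const (6 * ℓ)).add (hasDerivAt_pow 2 x)).add
      ((hasDerivAt_id x).const_mul (ℓ / 2))).add_const (ℓ ^ 2 / 6) |>.congr_deriv ?_
    norm_num
    field_simp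
    ring
  have square (x : ℝ) : HasDerivAt (fun y => y ^ 2 / 2) x x := by
    simpa using (hasDerivAt_pow 2 x).div_const 2
  have inner := hasDerivAt_ite_le square (fun x => hasDerivAt_const x (0 : ℝ)) (by simp) rfl
  have middle := hasDerivAt_ite_le (a := -ℓ) cubic inner
    (by rw [if_pos (by linarith)]; field_simp; ring)
    (by rw [if_pos (by linarith)]; field_simp; ring)
  simp only [Sl_min_zero_eq hℓ, Sl'_min_zero_eq hℓ]
  exact hasDerivAt_ite_le linear middle
    (by rw [if_pos (by linarith)]; field_simp; ring)
    (by rw [if_pos (by linarith)]; field_simp; ring) v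

noncomputable def r₁ (ℓ v : ℝ) : ℝ :=
  if v ≤ -(2 * ℓ) then -(3 * ℓ + 2 * v) / 2
  else if v ≤ -ℓ then (v + ℓ) ^ 2 / (2 * ℓ) else 0

theorem Sl'_min_zero_sub_min_zero_eq_r₁ (hℓ : 0 < ℓ) (v : ℝ) :
    Sl' ℓ (min v 0) - min v 0 = r₁ ℓ v := by
  rw [Sl'_min_zero_eq hℓ, r₁]
  rcases le_or_gt v 0 with hv | hv
  · rw [min_eq_left hv]
    split_ifs
    · ring
    · field_simp
      ring
    · ring
  · simp [min_eq_right hv.le, hv.not_ge, (by linarith : ¬ v ≤ -ℓ),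
      (by linarith : ¬ v ≤ -(2 * ℓ))]

theorem r₁_nonneg (hℓ : 0 < ℓ) (v : ℝ) : 0 ≤ r₁ ℓ v := by
  unfold r₁
  split_ifs
  · linarith
  · positivity
  · rfl

noncomputable def r₁' (ℓ v : ℝ) : ℝ :=
  if v ≤ -(2 * ℓ) then -1 else if v ≤ -ℓ then (v + ℓ) / ℓ else 0

theorem hasDerivAt_r₁ (hℓ : 0 < ℓ) (v : ℝ) : HasDerivAt (r₁ ℓ) (r₁' ℓ v) v := by
  have linear (x : ℝ) : HasDerivAt (fun y => -(3 * ℓ + 2 * y) / 2) (-1) x := by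
    simpa using ((((hasDerivAt_id x).const_mul 2).const_add (3 * ℓ)).neg).div_const 2
  have square (x : ℝ) : HasDerivAt (fun y => (y + ℓ) ^ 2 / (2 * ℓ)) ((x + ℓ) / ℓ) x := by
    refine (((hasDerivAt_id x).add_const ℓ).pow 2).div_const (2 * ℓ) |>.congr_deriv ?_
    field_simp
    simp
  have inner := hasDerivAt_ite_le (a := -ℓ) square (fun x => hasDerivAt_const x (0 : ℝ))
    (by simp) (by simp)
  exact hasDerivAt_ite_le linear inner
    (by rw [if_pos (by linarith)]; field_simp; ring)
    (by rw [if_pos (by linarith)]; field_simp; ring) v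

theorem monotone_r₁' (hℓ : 0 < ℓ) : Monotone (r₁' ℓ) := by
  have inner : Monotone fun v : ℝ => if v ≤ -ℓ then (v + ℓ) / ℓ else 0 :=
    monotone_ite_le (fun x y hxy => div_le_div_of_nonneg_right (by linarith) hℓ.le)
      monotone_const (by simp)
  refine monotone_ite_le monotone_const inner ?_
  rw [if_pos (by linarith)]
  field_simp
  linarith

theorem convexOn_r₁ (hℓ : 0 < ℓ) : ConvexOn ℝ univ (r₁ ℓ) := by
  refine Monotone.convexOn_univ_of_deriv (fun v => (hasDerivAt_r₁ hℓ v).differentiableAt) ?_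
  rw [funext fun v => (hasDerivAt_r₁ hℓ v).deriv]
  exact monotone_r₁' hℓ

end

/-- For `ℓ > 0`: `v ↦ S_ℓ(v₋)` is differentiable with derivative `v ↦ S_ℓ'(v₋)`, and
`r₁(v) = S_ℓ'(v₋) − v₋` (explicitly `0` for `v ≥ −ℓ`, `(v+ℓ)²/(2ℓ)` for `−2ℓ < v < −ℓ`,
`−(3ℓ+2v)/2` for `v ≤ −2ℓ`) is nonnegative and convex. -/
theorem Sl_neg_part_derivative_and_r1 (ℓ : ℝ) (hℓ : 0 < ℓ) :
    (∀ v : ℝ, HasDerivAt (fun w => Sl ℓ (min w 0)) (Sl' ℓ (min v 0)) v) ∧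
    (∀ v : ℝ, -ℓ ≤ v → Sl' ℓ (min v 0) - min v 0 = 0) ∧
    (∀ v : ℝ, -(2 * ℓ) < v → v < -ℓ →
      Sl' ℓ (min v 0) - min v 0 = (v + ℓ) ^ 2 / (2 * ℓ)) ∧
    (∀ v : ℝ, v ≤ -(2 * ℓ) →
      Sl' ℓ (min v 0) - min v 0 = -(3 * ℓ + 2 * v) / 2) ∧
    (∀ v : ℝ, 0 ≤ Sl' ℓ (min v 0) - min v 0) ∧
    ConvexOn ℝ Set.univ (fun v => Sl' ℓ (min v 0) - min v 0) := by
  simp only [Sl'_min_zero_sub_min_zero_eq_r₁ hℓ]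
  refine ⟨hasDerivAt_Sl_min_zero hℓ, fun v hv => ?_, fun v hv₁ hv₂ => ?_, fun v hv => ?_,
    r₁_nonneg hℓ, convexOn_r₁ hℓ⟩
  · rw [r₁, if_neg (by linarith)]
    split_ifs with h
    · simp [le_antisymm h hv]
    · rfl
  · rw [r₁, if_neg hv₁.not_ge, if_pos hv₂.le]
  · rw [r₁, if_pos hv]
end

section
/- Fix ℓ > 0. The function r : ℝ → ℝ defined by r(v) = (1/2)v₋² − S_ℓ(v₋) (explicitly, r(v) = 0 for v ≥ −ℓ, r(v) = −(v+ℓ)³/(6ℓ) for −2ℓ < v < −ℓ, and r(v) = (3v² + 9ℓv + 7ℓ²)/6 for v ≤ −2ℓ) is nonnegative and convex on ℝ. -/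
open Real

/-! On `(-∞, -2ℓ]`, `[-2ℓ, -ℓ]` and `[-ℓ, ∞)` the function is the quadratic `(3v² + 9ℓv + 7ℓ²)/6`,
the cubic `-(v + ℓ)³/(6ℓ)` and `0`. Their derivatives `v + 3ℓ/2`, `-(v + ℓ)²/(2ℓ)` and `0` agree at the
breakpoints, so the function is differentiable everywhere with a monotone derivative, hence convex.
Nonnegativity is read off the pieces: `v + ℓ ≤ 0` on the cubic piece, and
`3v² + 9ℓv + 7ℓ² = 3(v + 3ℓ/2)² + ℓ²/4`. -/

open Set Filter Topology

theorem hasDerivAt_of_eventuallyEq_nhdsLE_of_eventuallyEq_nhdsGE {f g h : ℝ → ℝ} {a d : ℝ}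
    (hfg : f =ᶠ[𝓝[≤] a] g) (hfh : f =ᶠ[𝓝[≥] a] h) (hg : HasDerivAt g d a)
    (hh : HasDerivAt h d a) : HasDerivAt f d a := by
  have hleft := hg.hasDerivWithinAt.congr_of_eventuallyEq hfg (hfg.eq_of_nhdsWithin self_mem_Iic)
  have hright := hh.hasDerivWithinAt.congr_of_eventuallyEq hfh (hfh.eq_of_nhdsWithin self_mem_Ici)
  rw [← hasDerivWithinAt_univ, ← Iic_union_Ici (a := a)]
  exact hleft.union hright

noncomputable def negPartDefect (ℓ v : ℝ) : ℝ := (1 / 2) * (min v 0) ^ 2 - Sl ℓ (min v 0)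

noncomputable def negPartDefectDeriv (ℓ v : ℝ) : ℝ :=
  if v ≤ -(2 * ℓ) then v + 3 * ℓ / 2 else if v ≤ -ℓ then -((v + ℓ) ^ 2) / (2 * ℓ) else 0

section

variable {ℓ v : ℝ}

theorem negPartDefect_of_neg_le (hℓ : 0 < ℓ) (hv : -ℓ ≤ v) : negPartDefect ℓ v = 0 := by
  rcases le_or_gt 0 v with h | h
  · simp [negPartDefect, min_eq_right h, Sl, hℓ.le]
  · rw [negPartDefect, min_eq_left h.le, Sl, if_pos (by rw [abs_of_neg h]; linarith)]
    ring

theorem negPartDefect_of_mem_Icc (hℓ : 0 < ℓ) (hv : v ∈ Icc (-(2 * ℓ)) (-ℓ)) :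
    negPartDefect ℓ v = -((v + ℓ) ^ 3) / (6 * ℓ) := by
  have hv0 : v < 0 := by linarith [hv.2]
  rw [negPartDefect, min_eq_left hv0.le, Sl, abs_of_neg hv0]
  split_ifs
  · obtain rfl : v = -ℓ := by linarith [hv.2]
    field_simp
    ring
  · field_simp
    ring
  · obtain rfl : v = -(2 * ℓ) := by linarith [hv.1]
    field_simp
    ring

theorem negPartDefect_of_le_neg_two_mul (hℓ : 0 < ℓ) (hv : v ≤ -(2 * ℓ)) :
    negPartDefect ℓ v = (3 * v ^ 2 + 9 * ℓ * v + 7 * ℓ ^ 2) / 6 := by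
  have hv0 : v < 0 := by linarith
  rw [negPartDefect, min_eq_left hv0.le, Sl, abs_of_neg hv0, if_neg (by linarith),
    if_neg (by linarith)]
  ring

theorem negPartDefect_nonneg (hℓ : 0 < ℓ) (v : ℝ) : 0 ≤ negPartDefect ℓ v := by
  rcases le_or_gt (-ℓ) v with h₁ | h₁
  · rw [negPartDefect_of_neg_le hℓ h₁]
  rcases le_or_gt (-(2 * ℓ)) v with h₂ | h₂
  · rw [negPartDefect_of_mem_Icc hℓ ⟨h₂, h₁.le⟩]
    have : (v + ℓ) ^ 3 ≤ 0 := Odd.pow_nonpos (by decide) (by linarith)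
    exact div_nonneg (by linarith) (by linarith)
  · rw [negPartDefect_of_le_neg_two_mul hℓ h₂.le]
    nlinarith [sq_nonneg (v + 3 * ℓ / 2)]

theorem negPartDefectDeriv_of_neg_le (hℓ : 0 < ℓ) (hv : -ℓ ≤ v) : negPartDefectDeriv ℓ v = 0 := by
  rcases hv.lt_or_eq with h | rfl
  · rw [negPartDefectDeriv, if_neg (by linarith), if_neg (by linarith)]
  · rw [negPartDefectDeriv, if_neg (by linarith), if_pos le_rfl]
    simp

theorem negPartDefectDeriv_of_mem_Icc (hℓ : 0 < ℓ) (hv : v ∈ Icc (-(2 * ℓ)) (-ℓ)) :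
    negPartDefectDeriv ℓ v = -((v + ℓ) ^ 2) / (2 * ℓ) := by
  rcases hv.1.lt_or_eq with h | rfl
  · rw [negPartDefectDeriv, if_neg (by linarith), if_pos hv.2]
  · rw [negPartDefectDeriv, if_pos le_rfl]
    field_simp
    ring

theorem negPartDefectDeriv_of_le_neg_two_mul (hv : v ≤ -(2 * ℓ)) :
    negPartDefectDeriv ℓ v = v + 3 * ℓ / 2 :=
  if_pos hv

theorem hasDerivAt_negPartDefect (hℓ : 0 < ℓ) (x : ℝ) :
    HasDerivAt (negPartDefect ℓ) (negPartDefectDeriv ℓ x) x := by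
  have quad (hx : x ≤ -(2 * ℓ)) :
      HasDerivAt (fun v => (3 * v ^ 2 + 9 * ℓ * v + 7 * ℓ ^ 2) / 6) (negPartDefectDeriv ℓ x) x := by
    rw [negPartDefectDeriv_of_le_neg_two_mul hx]
    exact ((((hasDerivAt_pow 2 x).const_mul 3).add ((hasDerivAt_id' x).const_mul (9 * ℓ))).add_const
      (7 * ℓ ^ 2)).div_const 6 |>.congr_deriv (by ring)
  have cubic (hx : x ∈ Icc (-(2 * ℓ)) (-ℓ)) :
      HasDerivAt (fun v => -((v + ℓ) ^ 3) / (6 * ℓ)) (negPartDefectDeriv ℓ x) x := by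
    rw [negPartDefectDeriv_of_mem_Icc hℓ hx]
    exact (((hasDerivAt_id' x).add_const ℓ).pow 3).neg.div_const (6 * ℓ) |>.congr_deriv
      (by field_simp; ring)
  have zero (hx : -ℓ ≤ x) : HasDerivAt (fun _ => (0 : ℝ)) (negPartDefectDeriv ℓ x) x := by
    rw [negPartDefectDeriv_of_neg_le hℓ hx]
    exact hasDerivAt_const x 0
  have eq_quad : EqOn (negPartDefect ℓ) _ (Iic (-(2 * ℓ))) :=
    fun v hv => negPartDefect_of_le_neg_two_mul hℓ hv
  have eq_cubic : EqOn (negPartDefect ℓ) _ (Icc (-(2 * ℓ)) (-ℓ)) :=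
    fun v hv => negPartDefect_of_mem_Icc hℓ hv
  have eq_zero : EqOn (negPartDefect ℓ) (fun _ => 0) (Ici (-ℓ)) :=
    fun v hv => negPartDefect_of_neg_le hℓ hv
  rcases lt_trichotomy x (-(2 * ℓ)) with hx | rfl | hx
  · exact (quad hx.le).congr_of_eventuallyEq (eq_quad.eventuallyEq_of_mem (Iic_mem_nhds hx))
  · exact hasDerivAt_of_eventuallyEq_nhdsLE_of_eventuallyEq_nhdsGE
      (eq_quad.eventuallyEq_of_mem self_mem_nhdsWithin)
      (eq_cubic.eventuallyEq_of_mem (Icc_mem_nhdsGE (by linarith))) (quad le_rfl)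
      (cubic ⟨le_rfl, by linarith⟩)
  rcases lt_trichotomy x (-ℓ) with hx' | rfl | hx'
  · exact (cubic ⟨hx.le, hx'.le⟩).congr_of_eventuallyEq
      (eq_cubic.eventuallyEq_of_mem (Icc_mem_nhds hx hx'))
  · exact hasDerivAt_of_eventuallyEq_nhdsLE_of_eventuallyEq_nhdsGE
      (eq_cubic.eventuallyEq_of_mem (Icc_mem_nhdsLE hx)) (eq_zero.eventuallyEq_of_mem self_mem_nhdsWithin)
      (cubic ⟨hx.le, le_rfl⟩) (zero le_rfl)
  · exact (zero hx'.le).congr_of_eventuallyEq (eq_zero.eventuallyEq_of_mem (Ici_mem_nhds hx'))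

theorem negPartDefectDeriv_monotone (hℓ : 0 < ℓ) : Monotone (negPartDefectDeriv ℓ) := by
  refine MonotoneOn.Iic_union_Ici (a := -ℓ) ?_
    (monotoneOn_const.congr fun v hv => (negPartDefectDeriv_of_neg_le hℓ hv).symm)
  rw [← Iic_union_Icc_eq_Iic (by linarith : -(2 * ℓ) ≤ -ℓ)]
  refine MonotoneOn.union_right ?_ ?_ isGreatest_Iic (isLeast_Icc (by linarith))
  · exact ((monotone_id.add_const _).monotoneOn _).congr
      fun v hv => (negPartDefectDeriv_of_le_neg_two_mul hv).symm
  · refine MonotoneOn.congr (fun a ha b hb hab => ?_)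
      fun v hv => (negPartDefectDeriv_of_mem_Icc hℓ hv).symm
    rw [div_le_div_iff_of_pos_right (by positivity)]
    nlinarith [ha.2, hb.2]

theorem convexOn_negPartDefect (hℓ : 0 < ℓ) : ConvexOn ℝ univ (negPartDefect ℓ) := by
  have hderiv : deriv (negPartDefect ℓ) = negPartDefectDeriv ℓ :=
    funext fun x => (hasDerivAt_negPartDefect hℓ x).deriv
  refine Monotone.convexOn_univ_of_deriv (fun x => (hasDerivAt_negPartDefect hℓ x).differentiableAt) ?_
  rw [hderiv]
  exact negPartDefectDeriv_monotone hℓ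

end

/-- For `ℓ > 0`: `r(v) = (1/2)v₋² − S_ℓ(v₋)` (explicitly `0` for `v ≥ −ℓ`,
`−(v+ℓ)³/(6ℓ)` for `−2ℓ < v < −ℓ`, `(3v²+9ℓv+7ℓ²)/6` for `v ≤ −2ℓ`)
is nonnegative and convex on `ℝ`. -/
theorem Sl_neg_part_defect_convex (ℓ : ℝ) (hℓ : 0 < ℓ) :
    (∀ v : ℝ, -ℓ ≤ v → (1 / 2) * (min v 0) ^ 2 - Sl ℓ (min v 0) = 0) ∧
    (∀ v : ℝ, -(2 * ℓ) < v → v < -ℓ →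
      (1 / 2) * (min v 0) ^ 2 - Sl ℓ (min v 0) = -((v + ℓ) ^ 3) / (6 * ℓ)) ∧
    (∀ v : ℝ, v ≤ -(2 * ℓ) →
      (1 / 2) * (min v 0) ^ 2 - Sl ℓ (min v 0)
        = (3 * v ^ 2 + 9 * ℓ * v + 7 * ℓ ^ 2) / 6) ∧
    (∀ v : ℝ, 0 ≤ (1 / 2) * (min v 0) ^ 2 - Sl ℓ (min v 0)) ∧
    ConvexOn ℝ Set.univ (fun v => (1 / 2) * (min v 0) ^ 2 - Sl ℓ (min v 0)) :=
  ⟨fun _ hv => negPartDefect_of_neg_le hℓ hv,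
    fun _ h₁ h₂ => negPartDefect_of_mem_Icc hℓ ⟨h₁.le, h₂.le⟩,
    fun _ hv => negPartDefect_of_le_neg_two_mul hℓ hv,
    negPartDefect_nonneg hℓ,
    convexOn_negPartDefect hℓ⟩
end

section
/- Fix ℓ > 0. For every v ∈ ℝ, S_ℓ(v₊)·v − (1/2)·S_ℓ'(v₊)·v² ≥ 0. Explicitly, this quantity equals 0 for v ≤ ℓ, equals (v/(12ℓ))(v−ℓ)²(v+2ℓ) for ℓ < v < 2ℓ, and equals (ℓ v/12)(9v − 14ℓ) for v ≥ 2ℓ, all of which are nonnegative. -/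
open Real

/-- For `ℓ > 0` and every `v`: `S_ℓ(v₊)v − (1/2)S_ℓ'(v₊)v² ≥ 0`; explicitly it equals `0`
for `v ≤ ℓ`, `(v/(12ℓ))(v−ℓ)²(v+2ℓ)` for `ℓ < v < 2ℓ`, and `(ℓv/12)(9v−14ℓ)` for `v ≥ 2ℓ`. -/
theorem Sl_pos_part_entropy_flux_nonneg (ℓ : ℝ) (hℓ : 0 < ℓ) :
    (∀ v : ℝ, 0 ≤ Sl ℓ (max v 0) * v - (1 / 2) * Sl' ℓ (max v 0) * v ^ 2) ∧
    (∀ v : ℝ, v ≤ ℓ → Sl ℓ (max v 0) * v - (1 / 2) * Sl' ℓ (max v 0) * v ^ 2 = 0) ∧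
    (∀ v : ℝ, ℓ < v → v < 2 * ℓ →
      Sl ℓ (max v 0) * v - (1 / 2) * Sl' ℓ (max v 0) * v ^ 2
        = (v / (12 * ℓ)) * (v - ℓ) ^ 2 * (v + 2 * ℓ)) ∧
    (∀ v : ℝ, 2 * ℓ ≤ v →
      Sl ℓ (max v 0) * v - (1 / 2) * Sl' ℓ (max v 0) * v ^ 2
        = (ℓ * v / 12) * (9 * v - 14 * ℓ)) := by
  have key : ∀ v : ℝ,
      (v ≤ ℓ → Sl ℓ (max v 0) * v - (1 / 2) * Sl' ℓ (max v 0) * v ^ 2 = 0) ∧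
      (ℓ < v → v < 2 * ℓ → Sl ℓ (max v 0) * v - (1 / 2) * Sl' ℓ (max v 0) * v ^ 2
        = (v / (12 * ℓ)) * (v - ℓ) ^ 2 * (v + 2 * ℓ)) ∧
      (2 * ℓ ≤ v → Sl ℓ (max v 0) * v - (1 / 2) * Sl' ℓ (max v 0) * v ^ 2
        = (ℓ * v / 12) * (9 * v - 14 * ℓ)) := by
    intro v
    refine ⟨?_, ?_, ?_⟩
    · intro hv
      rcases le_or_gt v 0 with h0 | h0
      · rw [max_eq_right h0]
        simp [Sl, Sl', abs_zero, hℓ.le]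
      · rw [max_eq_left h0.le]
        rw [Sl, Sl', abs_of_pos h0, if_pos hv, if_pos hv]
        ring
    · intro h1 h2
      have h0 : 0 < v := lt_trans hℓ h1
      rw [max_eq_left h0.le, Sl, Sl', abs_of_pos h0,
        if_neg (not_le.mpr h1), if_pos h2, if_neg (not_le.mpr h1), if_pos h2,
        Real.sign_of_pos h0]
      field_simp
      ring
    · intro hv
      have h0 : 0 < v := lt_of_lt_of_le (by linarith) hv
      have h1 : ¬ v ≤ ℓ := by push_neg; linarith
      rw [max_eq_left h0.le, Sl, Sl', abs_of_pos h0,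
        if_neg h1, if_neg (not_lt.mpr hv), if_neg h1, if_neg (not_lt.mpr hv),
        Real.sign_of_pos h0]
      ring
  refine ⟨?_, fun v => (key v).1, fun v => (key v).2.1, fun v => (key v).2.2⟩
  intro v
  rcases le_or_gt v ℓ with h | h
  · rw [(key v).1 h]
  · rcases lt_or_ge v (2 * ℓ) with h2 | h2
    · rw [(key v).2.1 h h2]
      have : 0 < v := lt_trans hℓ h
      positivity
    · rw [(key v).2.2 h2]
      have h9 : 0 ≤ 9 * v - 14 * ℓ := by linarith
      have : 0 < v := lt_of_lt_of_le (by linarith) h2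
      positivity
end

section
/- Let S : ℝ → ℝ and σ, q : ℝ → ℝ be twice continuously differentiable. Then for every x ∈ ℝ: S'(q(x)) · d/dx[ σ · d/dx(σ q) ](x) = d²/dx²[ σ² · (S∘q) ](x) − d/dx[ (1/2)(σ²)' · (3 (S∘q) − 2 (S'∘q)·q) ](x) + (1/2)(σ²)''(x) · ( S(q(x)) − S'(q(x)) q(x) ) − S''(q(x)) · ( ( d/dx(σ q)(x) )² − ( σ'(x) q(x) )² ). -/
/-! The product rule, the second-order Leibniz rule and the second-order chain rule
`(S ∘ q)'' = S''(q) q'² + S'(q) q''` expand every term into a polynomial in the 2-jets of `σ` and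
`q` at `x` and of `S` at `q x`; the identity between these polynomials is then checked by `ring`. -/

section
variable {f g : ℝ → ℝ}

theorem deriv_fun_mul_of_differentiable (hf : Differentiable ℝ f) (hg : Differentiable ℝ g) :
    deriv (fun y => f y * g y) = fun y => deriv f y * g y + f y * deriv g y :=
  funext fun y => deriv_fun_mul (hf y) (hg y)

theorem deriv_fun_comp_of_differentiable (hf : Differentiable ℝ f) (hg : Differentiable ℝ g) :
    deriv (fun y => f (g y)) = fun y => deriv f (g y) * deriv g y :=
  funext fun y => deriv_comp y (hf (g y)) (hg y)

theorem deriv_deriv_fun_mul (hf : ContDiff ℝ 2 f) (hg : ContDiff ℝ 2 g) (x : ℝ) :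
    deriv (deriv fun y => f y * g y) x
      = deriv (deriv f) x * g x + 2 * deriv f x * deriv g x + f x * deriv (deriv g) x := by
  have hf₁ := hf.differentiable two_ne_zero
  have hg₁ := hg.differentiable two_ne_zero
  rw [deriv_fun_mul_of_differentiable hf₁ hg₁, deriv_fun_add (by fun_prop) (by fun_prop),
    deriv_fun_mul (hf.differentiable_deriv_two x) (hg₁ x),
    deriv_fun_mul (hf₁ x) (hg.differentiable_deriv_two x)]
  ring

theorem deriv_deriv_fun_comp (hf : ContDiff ℝ 2 f) (hg : ContDiff ℝ 2 g) (x : ℝ) :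
    deriv (deriv fun y => f (g y)) x
      = deriv (deriv f) (g x) * deriv g x ^ 2 + deriv f (g x) * deriv (deriv g) x := by
  have hg₁ := hg.differentiable two_ne_zero
  rw [deriv_fun_comp_of_differentiable (hf.differentiable two_ne_zero) hg₁,
    deriv_fun_mul (c := fun y => deriv f (g y)) (hf.differentiable_deriv_two.comp hg₁ x)
      (hg.differentiable_deriv_two x),
    deriv_fun_comp_of_differentiable hf.differentiable_deriv_two hg₁]
  ring

end

/-- Renormalisation identity: for twice continuously differentiable `S, σ, q : ℝ → ℝ`
and every `x`,
`S'(q)·(σ(σq)')' = (σ²(S∘q))'' − ((1/2)(σ²)'(3S∘q − 2(S'∘q)q))'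
 + (1/2)(σ²)''(S(q) − S'(q)q) − S''(q)(((σq)')² − (σ'q)²)`. -/
theorem renormalisation_identity (S σ q : ℝ → ℝ)
    (hS : ContDiff ℝ 2 S) (hσ : ContDiff ℝ 2 σ) (hq : ContDiff ℝ 2 q) (x : ℝ) :
    deriv S (q x) * deriv (fun y => σ y * deriv (fun z => σ z * q z) y) x
      = deriv (deriv (fun y => σ y ^ 2 * S (q y))) x
        - deriv (fun y =>
            (1 / 2) * deriv (fun z => σ z ^ 2) y
              * (3 * S (q y) - 2 * deriv S (q y) * q y)) x
        + (1 / 2) * deriv (deriv (fun y => σ y ^ 2)) x * (S (q x) - deriv S (q x) * q x)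
        - deriv (deriv S) (q x)
            * ((deriv (fun z => σ z * q z) x) ^ 2 - (deriv σ x * q x) ^ 2) := by
  have hS₁ := hS.differentiable two_ne_zero
  have hσ₁ := hσ.differentiable two_ne_zero
  have hq₁ := hq.differentiable two_ne_zero
  simp only [sq]
  rw [deriv_fun_mul (hσ₁ x) ((hσ.mul hq).differentiable_deriv_two x),
    deriv_deriv_fun_mul hσ hq,
    deriv_deriv_fun_mul (g := fun y => S (q y)) (hσ.mul hσ) (hS.comp hq),
    deriv_deriv_fun_mul hσ hσ, deriv_deriv_fun_comp hS hq,
    deriv_fun_mul_of_differentiable hσ₁ hσ₁, deriv_fun_mul_of_differentiable hσ₁ hq₁]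
  simp (disch := fun_prop) only [deriv_fun_mul, deriv_fun_add, deriv_fun_sub, deriv_const,
    deriv_fun_comp_of_differentiable hS₁ hq₁,
    deriv_fun_comp_of_differentiable hS.differentiable_deriv_two hq₁]
  ring
end

section
/- Let (Z, B_Z) and (W, B_W) be measurable spaces such that the diagonal Δ_{W×W} = {(w,w) : w ∈ W} belongs to the product σ-algebra B_W ⊗ B_W. Let F : Z → W be B_Z/B_W-measurable. Let (Ω, F, ℙ) and (Ω', F', ℙ') be probability spaces and let U : Ω → Z, U' : Ω' → Z and V : Ω' → W be measurable maps. If the pushforward of ℙ under ω ↦ (U(ω), F(U(ω))) coincides with the pushforward of ℙ' under ω' ↦ (U'(ω'), V(ω')) as measures on (Z × W, B_Z ⊗ B_W), then V = F ∘ U' holds ℙ'-almost surely. -/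
open MeasureTheory

/-! The graph `{(z, w) | F z = w}` is measurable, being the preimage of the diagonal under
`(z, w) ↦ (F z, w)`. The law of `(U, F ∘ U)` is carried by the graph, hence so is the law of
`(U', V)`, which says exactly that `V = F ∘ U'` almost surely. -/

theorem MeasureTheory.ae_mem_map_of_forall_mem {α β : Type*} [MeasurableSpace α]
    [MeasurableSpace β] (f : α → β) (μ : Measure α) {s : Set β} (hs : MeasurableSet s)
    (h : ∀ x, f x ∈ s) : ∀ᵐ y ∂μ.map f, y ∈ s := by
  by_cases hf : AEMeasurable f μ
  · exact (ae_map_iff hf hs).2 (.of_forall h)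
  · simp [Measure.map_of_not_aemeasurable hf]

theorem identification_of_composition_general
    {Z W : Type*} [MeasurableSpace Z] [MeasurableSpace W]
    (hdiag : MeasurableSet {p : W × W | p.1 = p.2})
    {F : Z → W} (hF : Measurable F)
    {Ω Ω' : Type*} [MeasurableSpace Ω] [MeasurableSpace Ω']
    (P : Measure Ω) (P' : Measure Ω')
    {U : Ω → Z} {U' : Ω' → Z} {V : Ω' → W}
    (hU' : Measurable U') (hV : Measurable V)
    (hlaw : Measure.map (fun ω => (U ω, F (U ω))) P
          = Measure.map (fun ω' => (U' ω', V ω')) P') :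
    ∀ᵐ ω' ∂P', V ω' = F (U' ω') := by
  have : MeasurableEq W := ⟨hdiag⟩
  have hgraph : MeasurableSet {p : Z × W | F p.1 = p.2} :=
    measurableSet_eq_fun (hF.comp measurable_fst) measurable_snd
  have hlaw_graph := ae_mem_map_of_forall_mem (fun ω => (U ω, F (U ω))) P hgraph fun _ => rfl
  rw [hlaw] at hlaw_graph
  exact (ae_of_ae_map (hU'.prodMk hV).aemeasurable hlaw_graph).mono fun _ h => h.symm

/-- Identification of a.s. representations of nonlinear compositions: if the diagonal of
`W × W` is measurable for the product σ-algebra, `F : Z → W` is measurable, and the joint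
law of `(U, F(U))` under `ℙ` equals the joint law of `(U', V)` under `ℙ'`, then
`V = F ∘ U'` almost surely. -/
theorem identification_of_composition
    {Z W : Type*} [MeasurableSpace Z] [MeasurableSpace W]
    (hdiag : MeasurableSet {p : W × W | p.1 = p.2})
    {F : Z → W} (hF : Measurable F)
    {Ω Ω' : Type*} [MeasurableSpace Ω] [MeasurableSpace Ω']
    (P : Measure Ω) (P' : Measure Ω') [IsProbabilityMeasure P] [IsProbabilityMeasure P']
    {U : Ω → Z} {U' : Ω' → Z} {V : Ω' → W}
    (hU : Measurable U) (hU' : Measurable U') (hV : Measurable V)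
    (hlaw : Measure.map (fun ω => (U ω, F (U ω))) P
          = Measure.map (fun ω' => (U' ω', V ω')) P') :
    ∀ᵐ ω' ∂P', V ω' = F (U' ω') :=
  identification_of_composition_general hdiag hF P P' hU' hV hlaw
end
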